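/- Let P be an orthogonal projection onto a linear subspace of the space of n×n symmetric matrices (with Frobenius inner product), let P⊥ = Id − P, and let Ω, Ω⊥ = E_n − Ω be as in the ADMM linearization (Ω with block form [[E_r, Θᵀ],[Θ,0]], entries of Θ in (0,1)). Define the linear map M(H) := P(Ω⊥ ∘ H) + P⊥(Ω ∘ H). Then M is firmly nonexpansive: ⟨M(H), H⟩ ≥ ‖M(H)‖_F² for all symmetric H. -/
import Mathlib


open Matrix

/-- The trace (Frobenius) inner product `⟨A, B⟩ = tr (Aᵀ B)`. -/
def finner {m n : Type*} [Fintype m] [Fintype n]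
    (A B : Matrix m n ℝ) : ℝ :=
  (Aᵀ * B).trace

lemma finner_comm {m n : Type*} [Fintype m] [Fintype n]
    (A B : Matrix m n ℝ) : finner A B = finner B A := by
  unfold finner
  rw [← Matrix.trace_transpose, Matrix.transpose_mul, Matrix.transpose_transpose]

lemma finner_add_left {m n : Type*} [Fintype m] [Fintype n]
    (A B C : Matrix m n ℝ) : finner (A + B) C = finner A C + finner B C := by
  simp [finner, Matrix.transpose_add, Matrix.add_mul]

lemma finner_add_right {m n : Type*} [Fintype m] [Fintype n]
    (A B C : Matrix m n ℝ) : finner A (B + C) = finner A B + finner A C := by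
  simp [finner, Matrix.mul_add]

lemma finner_sub_left {m n : Type*} [Fintype m] [Fintype n]
    (A B C : Matrix m n ℝ) : finner (A - B) C = finner A C - finner B C := by
  simp [finner, Matrix.transpose_sub, Matrix.sub_mul]

lemma finner_sub_right {m n : Type*} [Fintype m] [Fintype n]
    (A B C : Matrix m n ℝ) : finner A (B - C) = finner A B - finner A C := by
  simp [finner, Matrix.mul_sub]

lemma finner_eq_sum {m n : Type*} [Fintype m] [Fintype n]
    (A B : Matrix m n ℝ) :
    finner A B = ∑ j, ∑ i, A i j * B i j := by
  simp [finner, Matrix.trace, Matrix.mul_apply, Matrix.diag]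

/-- Let `P` be an orthogonal projection onto a subspace of symmetric
matrices (idempotent, self-adjoint w.r.t. the Frobenius inner product, range consisting of
symmetric matrices), `P⊥ = Id - P`, and `Ω = [[E_r, Θᵀ],[Θ,0]]` with entries of `Θ` in `(0,1)`.
Then `M(H) := P(Ω⊥ ∘ H) + P⊥(Ω ∘ H)` is firmly nonexpansive:
`⟨M(H), H⟩ ≥ ‖M(H)‖_F²` for all symmetric `H`. -/
theorem stmt_7 {r s : ℕ}
    (P : Matrix (Fin r ⊕ Fin s) (Fin r ⊕ Fin s) ℝ →ₗ[ℝ]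
      Matrix (Fin r ⊕ Fin s) (Fin r ⊕ Fin s) ℝ)
    (hPidem : ∀ X, P (P X) = P X)
    (hPadj : ∀ X Y, finner (P X) Y = finner X (P Y))
    (hPsymm : ∀ X : Matrix (Fin r ⊕ Fin s) (Fin r ⊕ Fin s) ℝ, (P X).IsSymm)
    (Θ : Matrix (Fin s) (Fin r) ℝ) (hΘ : ∀ i j, Θ i j ∈ Set.Ioo (0 : ℝ) 1)
    (H : Matrix (Fin r ⊕ Fin s) (Fin r ⊕ Fin s) ℝ) (hH : H.IsSymm) :
    let Ω : Matrix (Fin r ⊕ Fin s) (Fin r ⊕ Fin s) ℝ :=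
      fromBlocks (Matrix.of fun _ _ => 1) Θᵀ Θ 0
    let Ωp : Matrix (Fin r ⊕ Fin s) (Fin r ⊕ Fin s) ℝ := (Matrix.of fun _ _ => 1) - Ω
    let MH := P (Ωp ⊙ H) + ((Ω ⊙ H) - P (Ω ⊙ H))
    finner MH MH ≤ finner MH H := by
  intro Ω Ωp MH
  have hΩp : Ωp = (Matrix.of fun _ _ => 1) - Ω := rfl
  set A := Ω ⊙ H with hA
  set B := Ωp ⊙ H with hB
  have hMH : MH = P B + (A - P A) := rfl
  have hsum : A + B = H := by
    rw [hA, hB, hΩp]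
    ext i j
    simp [Matrix.hadamard]
    ring
  have hdiff : H - MH = P A + (B - P B) := by
    rw [hMH, ← hsum]; abel
  -- key inner product identities from idempotence and self-adjointness
  have h1 : finner (P B) (P B) = finner (P B) B := by
    rw [hPadj, hPidem, ← hPadj]
  have h2 : finner (P A) (P A) = finner A (P A) := by
    rw [hPadj, hPidem]
  have h3 : finner (P B) (P A) = finner (P A) B := by
    rw [hPadj, hPidem, finner_comm, hPadj, finner_comm]
  have h4 : finner A (P B) = finner (P A) B := by
    rw [← hPadj]
  have h8 : finner (P A) (P B) = finner (P A) B := by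
    rw [hPadj, hPidem, ← hPadj]
  have h5 : finner A (P A) = finner (P A) A := finner_comm _ _
  have h6 : finner (P B) B = finner B (P B) := finner_comm _ _
  have key : finner MH H - finner MH MH = finner A B := by
    have : finner MH (H - MH) = finner A B := by
      rw [hdiff, hMH]
      simp only [finner_add_left, finner_add_right, finner_sub_left, finner_sub_right]
      have h7 : finner A B = finner B A := finner_comm _ _
      linarith [h1, h2, h3, h4, h5, h6, h8]
    rw [finner_sub_right] at this
    linarith
  have hnn : 0 ≤ finner A B := by
    rw [finner_eq_sum]
    apply Finset.sum_nonneg; intro j _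
    apply Finset.sum_nonneg; intro i _
    have hΩbd : 0 ≤ Ω i j ∧ Ω i j ≤ 1 := by
      have hΩdef : Ω = fromBlocks (Matrix.of fun _ _ => 1) Θᵀ Θ 0 := rfl
      rcases i with i | i <;> rcases j with j | j <;>
        simp [hΩdef, Matrix.fromBlocks] <;>
        exact ⟨le_of_lt (hΘ _ _).1, le_of_lt (hΘ _ _).2⟩
    have hAij : A i j = Ω i j * H i j := rfl
    have hBij : B i j = (1 - Ω i j) * H i j := by
      rw [hB, hΩp]
      simp [Matrix.hadamard]
    rw [hAij, hBij]
    have := mul_nonneg (mul_nonneg hΩbd.1 (sub_nonneg.2 hΩbd.2)) (sq_nonneg (H i j))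
    nlinarith [this]
  linarith
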